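/- arXiv:1904.03645 — 2 statements merged into one kernel-verified Lean document; each statement's English description precedes it below -/
import Mathlib

section
/- For every integer n ≥ 2 and every integer p with p ≥ 1 if n is even and p ≥ 0 if n is odd, one has 4·(n² + ⌊n/2⌋·(⌊n/2⌋ - n - 1) - 1 + p) - 3·n·(n - 1) ≥ n - 1. -/
/-! Writing `n = 2m + r` with `r = n % 2`, the left-hand side equals `(n - 1) + 4p - 3 + 3r`
exactly, so the inequality says `4p ≥ 3` for even `n` and `4p ≥ 0` for odd `n`. -/

theorem per_point_excess_eq (n p : ℤ) :
    4 * (n ^ 2 + (n / 2) * ((n / 2) - n - 1) - 1 + p) - 3 * n * (n - 1)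
      = (n - 1) + (4 * p - 3 + 3 * (n % 2)) := by
  have hr : n % 2 * (n % 2) = n % 2 := by
    rcases Int.emod_two_eq_zero_or_one n with h | h <;> rw [h] <;> norm_num
  have hn : n = 2 * (n / 2) + n % 2 := by omega
  generalize n / 2 = m at hn ⊢
  generalize n % 2 = r at hn hr ⊢
  subst hn
  linear_combination hr

theorem per_point_inequality_general (n p : ℤ)
    (hpe : Even n → 1 ≤ p) (hpo : Odd n → 0 ≤ p) :
    4 * (n ^ 2 + (n / 2) * ((n / 2) - n - 1) - 1 + p) - 3 * n * (n - 1) ≥ n - 1 := by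
  rw [per_point_excess_eq]
  rcases Int.even_or_odd n with h | h
  · have := hpe h
    have := Int.even_iff.mp h
    omega
  · have := hpo h
    have := Int.odd_iff.mp h
    omega

theorem per_point_inequality (n p : ℤ) (hn : 2 ≤ n)
    (hpe : Even n → 1 ≤ p) (hpo : Odd n → 0 ≤ p) :
    4 * (n ^ 2 + (n / 2) * ((n / 2) - n - 1) - 1 + p) - 3 * n * (n - 1) ≥ n - 1 :=
  per_point_inequality_general n p hpe hpo
end

section
/- Suppose ν₁, …, ν_N are integers with νᵢ ≥ 2 for all i, and suppose integers p₁, …, p_N satisfy pᵢ ≥ 1 when νᵢ is even and pᵢ ≥ 0 when νᵢ is odd. Set μ = Σᵢ νᵢ(νᵢ - 1) and τ = Σᵢ (νᵢ² + ⌊νᵢ/2⌋(⌊νᵢ/2⌋ - νᵢ - 1) - 1 + pᵢ). Then 4τ - 3μ ≥ Σᵢ (νᵢ - 1), and consequently (4τ - 3μ)² + (4τ - 3μ) ≥ μ, hence 4τ > 3μ whenever N ≥ 1. -/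
/-!
Branch by branch, `4τᵢ - 3μᵢ` equals `νᵢ - 4 + 4pᵢ` for even `νᵢ` and `νᵢ - 1 + 4pᵢ` for odd `νᵢ`,
so the parity conditions on `pᵢ` give `4τᵢ - 3μᵢ ≥ νᵢ - 1`. Writing `xᵢ = νᵢ - 1 ≥ 0` and
`T = Σ xᵢ`, one has `μ = Σ xᵢ² + T ≤ T² + T`, and `x ↦ x² + x` is monotone on `x ≥ 0`.
-/

open Finset

lemma four_mul_tau_sub_three_mul_mu_of_even {ν : ℤ} (p : ℤ) (hν : Even ν) :
    4 * (ν ^ 2 + (ν / 2) * (ν / 2 - ν - 1) - 1 + p) - 3 * (ν * (ν - 1)) = ν - 4 + 4 * p := by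
  obtain ⟨m, rfl⟩ := hν
  rw [show (m + m) / 2 = m by omega]
  ring

lemma four_mul_tau_sub_three_mul_mu_of_odd {ν : ℤ} (p : ℤ) (hν : Odd ν) :
    4 * (ν ^ 2 + (ν / 2) * (ν / 2 - ν - 1) - 1 + p) - 3 * (ν * (ν - 1)) = ν - 1 + 4 * p := by
  obtain ⟨m, rfl⟩ := hν
  rw [show (2 * m + 1) / 2 = m by omega]
  ring

lemma sub_one_le_four_mul_tau_sub_three_mul_mu {ν p : ℤ}
    (hpe : Even ν → 1 ≤ p) (hpo : Odd ν → 0 ≤ p) :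
    ν - 1 ≤ 4 * (ν ^ 2 + (ν / 2) * (ν / 2 - ν - 1) - 1 + p) - 3 * (ν * (ν - 1)) := by
  rcases Int.even_or_odd ν with h | h
  · rw [four_mul_tau_sub_three_mul_mu_of_even p h]; linarith [hpe h]
  · rw [four_mul_tau_sub_three_mul_mu_of_odd p h]; linarith [hpo h]

lemma Finset.sum_mul_add_one_le_sq_sum_add_sum {ι R : Type*} [CommSemiring R] [PartialOrder R]
    [IsOrderedRing R] {s : Finset ι} {f : ι → R} (hf : ∀ i ∈ s, 0 ≤ f i) :
    ∑ i ∈ s, f i * (f i + 1) ≤ (∑ i ∈ s, f i) ^ 2 + ∑ i ∈ s, f i := by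
  simp only [mul_add_one, sum_add_distrib, ← sq]
  gcongr
  exact sum_sq_le_sq_sum_of_nonneg hf

theorem tau_min_inequality (N : ℕ) (ν p : Fin N → ℤ)
    (hν : ∀ i, 2 ≤ ν i)
    (hpe : ∀ i, Even (ν i) → 1 ≤ p i) (hpo : ∀ i, Odd (ν i) → 0 ≤ p i)
    (μ τ : ℤ)
    (hμ : μ = ∑ i, ν i * (ν i - 1))
    (hτ : τ = ∑ i, (ν i ^ 2 + (ν i / 2) * (ν i / 2 - ν i - 1) - 1 + p i)) :
    4 * τ - 3 * μ ≥ ∑ i, (ν i - 1) ∧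
    (4 * τ - 3 * μ) ^ 2 + (4 * τ - 3 * μ) ≥ μ ∧
    (1 ≤ N → 4 * τ > 3 * μ) := by
  have hpos : ∀ i ∈ univ, 0 < ν i - 1 := fun i _ => by linarith [hν i]
  have hlower : ∑ i, (ν i - 1) ≤ 4 * τ - 3 * μ := by
    rw [hμ, hτ, mul_sum, mul_sum, ← sum_sub_distrib]
    exact sum_le_sum fun i _ => sub_one_le_four_mul_tau_sub_three_mul_mu (hpe i) (hpo i)
  have hμ_le : μ ≤ (∑ i, (ν i - 1)) ^ 2 + ∑ i, (ν i - 1) := by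
    have hterm : ∀ i, ν i * (ν i - 1) = (ν i - 1) * (ν i - 1 + 1) := fun i => by ring
    simpa only [hμ, hterm] using sum_mul_add_one_le_sq_sum_add_sum fun i hi => (hpos i hi).le
  refine ⟨hlower, ?_, fun hN => ?_⟩
  · have hsum_nonneg : 0 ≤ ∑ i, (ν i - 1) := sum_nonneg fun i hi => (hpos i hi).le
    exact hμ_le.trans (by gcongr)
  · have : Nonempty (Fin N) := Fin.pos_iff_nonempty.mp hN
    linarith [sum_pos hpos univ_nonempty]
end
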